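/- arXiv:2205.07155 — 5 statements merged into one kernel-verified Lean document; each statement's English description precedes it below -/
import Mathlib

section
/- Let ν > 0, ε > 0, and let Φ : [−ε,∞) → ℝ be right-continuous with Φ(0) = 0 and (Φ(y) − Φ(x))/(y − x) ≥ ν for all −ε ≤ x < y. Define Ψ(σ) = inf{ t ≥ 0 : Φ(t) > σ } for σ ≥ 0 and the backward-delay function η(σ) = σ − Φ(Ψ(σ) − ε). Then η(σ) ≥ ν·ε for all σ ≥ 0. -/
open Set

/-- For a valid time change `Φ` on `[-ε,∞)` with difference quotients
bounded below by `ν > 0`, the backward-delay function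
`η σ = σ - Φ (Ψ σ - ε)` (where `Ψ σ = inf {t ≥ 0 | Φ t > σ}`) satisfies
`η σ ≥ ν · ε` for all `σ ≥ 0`. -/
theorem backward_delay_lower_bound
    (ν ε : ℝ) (hν : 0 < ν) (hε : 0 < ε) (Φ : ℝ → ℝ)
    (hΦ0 : Φ 0 = 0)
    (hrc : ∀ t : ℝ, -ε ≤ t → ContinuousWithinAt Φ (Ici t) t)
    (hquot : ∀ x y : ℝ, -ε ≤ x → x < y → ν ≤ (Φ y - Φ x) / (y - x))
    (Ψ : ℝ → ℝ)
    (hΨ : ∀ σ : ℝ, 0 ≤ σ → Ψ σ = sInf {t : ℝ | 0 ≤ t ∧ σ < Φ t})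
    (η : ℝ → ℝ)
    (hη : ∀ σ : ℝ, 0 ≤ σ → η σ = σ - Φ (Ψ σ - ε)) :
    ∀ σ : ℝ, 0 ≤ σ → ν * ε ≤ η σ := by
  intro σ hσ
  rw [hη σ hσ, hΨ σ hσ]
  set S : Set ℝ := {t : ℝ | 0 ≤ t ∧ σ < Φ t} with hSdef
  -- S is nonempty
  have hne : S.Nonempty := by
    refine ⟨(σ + 1) / ν, ?_, ?_⟩
    · positivity
    · have ht : (0:ℝ) < (σ + 1) / ν := by positivity
      have h := hquot 0 ((σ + 1) / ν) (by linarith) ht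
      rw [hΦ0] at h
      rw [le_div_iff₀ (by linarith)] at h
      have : ν * ((σ + 1) / ν) = σ + 1 := by field_simp
      nlinarith
  have hbdd : BddBelow S := ⟨0, fun t ht => ht.1⟩
  have hΨ0 : 0 ≤ sInf S := le_csInf hne (fun t ht => ht.1)
  rcases hΨ0.eq_or_lt with h0 | hpos
  · -- sInf S = 0
    have hrw : sInf S - ε = -ε := by rw [← h0]; ring
    rw [hrw]
    have h := hquot (-ε) 0 le_rfl (by linarith)
    rw [hΦ0, le_div_iff₀ (by linarith)] at h
    nlinarith
  · by_contra hc
    push_neg at hc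
    set c : ℝ := Φ (sInf S - ε) - (σ - ν * ε) with hcdef
    have hc0 : 0 < c := by simp only [hcdef]; linarith
    set δ : ℝ := min (sInf S) (min ε (c / ν)) / 2 with hδdef
    have hδ0 : 0 < δ := by
      have : 0 < c / ν := by positivity
      simp only [hδdef]
      positivity
    have hδS : δ < sInf S := by
      have h1 : δ ≤ sInf S / 2 := by
        simp only [hδdef]
        have := min_le_left (sInf S) (min ε (c / ν))
        linarith
      linarith
    have hδε : δ < ε := by
      have h1 : δ ≤ ε / 2 := by
        have := (min_le_right (sInf S) (min ε (c / ν))).trans (min_le_left ε (c / ν))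
        simp only [hδdef]
        linarith
      linarith
    have hδc : ν * δ < c := by
      have h1 : δ ≤ (c / ν) / 2 := by
        have := (min_le_right (sInf S) (min ε (c / ν))).trans (min_le_right ε (c / ν))
        simp only [hδdef]
        linarith
      have h2 : ν * δ ≤ ν * ((c / ν) / 2) := by
        exact mul_le_mul_of_nonneg_left h1 hν.le
      have h3 : ν * ((c / ν) / 2) = c / 2 := by field_simp
      linarith
    -- t := sInf S - δ is not in S, so Φ t ≤ σ
    have htnotin : sInf S - δ ∉ S := fun ht => absurd (csInf_le hbdd ht) (by linarith)
    have ht0 : 0 ≤ sInf S - δ := by linarith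
    have htle : Φ (sInf S - δ) ≤ σ := by
      by_contra h
      exact htnotin ⟨ht0, by linarith⟩
    -- slope bound from sInf S - ε to sInf S - δ
    have hq := hquot (sInf S - ε) (sInf S - δ) (by linarith) (by linarith)
    rw [le_div_iff₀ (by linarith)] at hq
    have : (sInf S - δ) - (sInf S - ε) = ε - δ := by ring
    rw [this] at hq
    nlinarith
end

section
/- Let Λ > 0, c > 0, ξ₀ = −ηf(0) < 0, where ηf : [0,∞) → ℝ satisfies ηf(σ) ≥ c for all σ and ξfun(σ) = σ − ηf(σ) is nondecreasing and right-continuous. Let A : [0,∞) → ℝ be given, and let G₀ : [ξ₀, 0] → ℝ be nondecreasing and continuous. Suppose G₁ and G₂ are two functions [ξ₀,∞) → ℝ which are nondecreasing, continuous, equal to G₀ on [ξ₀, 0], continuously differentiable on (0,∞), and which both satisfy, for all σ ≥ 0, the delayed renewal-type equation G(σ) = A(σ) + ∫_{(0,σ]} H(σ − τ, Λ) dμ_G(τ), where μ_G is the Lebesgue–Stieltjes measure of the nondecreasing right-continuous function τ ↦ G(ξfun(τ)), and H(σ, x) = (1/2)·(Erfc((x − σ)/√(2σ)) + exp(2x)·Erfc((x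 + σ)/√(2σ))) for σ > 0 (H(σ,x) = 0 for σ ≤ 0), with Erfc(z) = (2/√π)·∫_z^∞ exp(−t²) dt. Then G₁ = G₂ on [0,∞). -/
open Set MeasureTheory

/-- The complementary error function `Erfc z = (2/√π) ∫_z^∞ exp(-t²) dt`. -/
noncomputable def Erfc (z : ℝ) : ℝ :=
  (2 / Real.sqrt Real.pi) * ∫ t in Set.Ioi z, Real.exp (-t ^ 2)

/-- The cumulative first-passage distribution to `0` of a Brownian motion with unit
negative drift started at `x`:
`H σ x = (1/2)(Erfc((x-σ)/√(2σ)) + exp(2x) Erfc((x+σ)/√(2σ)))` for `σ > 0`, `0` else. -/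
noncomputable def Hker (σ x : ℝ) : ℝ :=
  if 0 < σ then
    (1 / 2) * (Erfc ((x - σ) / Real.sqrt (2 * σ)) +
      Real.exp (2 * x) * Erfc ((x + σ) / Real.sqrt (2 * σ)))
  else 0

/-! The delay `ηf ≥ c` makes the right-hand side of the equation on `[0, M + c]` depend only on
`G` restricted to `(-∞, M]`: the measure `μ_G` on `(0, σ]` is determined by the values
`G (τ - ηf τ)` with `τ ≤ σ`, and `τ - ηf τ ≤ σ - c`. Hence two solutions agreeing up to time `M`
agree up to time `M + c`, and the method of steps propagates the agreement to all of `[0, ∞)`. -/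

theorem StieltjesFunction.restrict_Ioc_measure_eq_of_eqOn {S₁ S₂ : StieltjesFunction ℝ}
    {a b : ℝ} (h : EqOn S₁ S₂ (Icc a b)) :
    S₁.measure.restrict (Ioc a b) = S₂.measure.restrict (Ioc a b) := by
  have : IsLocallyFiniteMeasure (S₁.measure.restrict (Ioc a b)) :=
    Measure.isLocallyFiniteMeasure_of_le Measure.restrict_le_self
  refine Measure.ext_of_Ioc _ _ fun s t _ => ?_
  rw [Measure.restrict_apply measurableSet_Ioc, Measure.restrict_apply measurableSet_Ioc,
    Ioc_inter_Ioc]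
  rcases le_or_gt (t ⊓ b) (s ⊔ a) with hle | hlt
  · rw [Ioc_eq_empty (not_lt.mpr hle), measure_empty, measure_empty]
  · rw [StieltjesFunction.measure_Ioc, StieltjesFunction.measure_Ioc,
      h ⟨le_sup_right, hlt.le.trans inf_le_right⟩, h ⟨le_sup_right.trans hlt.le, inf_le_right⟩]

theorem forall_nonneg_of_forall_Icc_imp_Icc_add {c : ℝ} (hc : 0 < c) {p : ℝ → Prop}
    (step : ∀ M, (∀ t ∈ Icc 0 M, p t) → ∀ t ∈ Icc 0 (M + c), p t) :
    ∀ t, 0 ≤ t → p t := by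
  have upto : ∀ n : ℕ, ∀ t ∈ Icc 0 (n * c), p t := by
    intro n
    induction n with
    | zero =>
      simpa using step (-c) fun t ht => absurd (ht.1.trans ht.2) (by linarith)
    | succ n ih => simpa [add_mul] using step (n * c) ih
  intro t ht
  obtain ⟨n, hn⟩ := exists_nat_ge (t / c)
  exact upto n t ⟨ht, (div_le_iff₀ hc).mp hn⟩

theorem quasi_renewal_uniqueness_general
    (Λ c : ℝ) (hc : 0 < c)
    (ηf : ℝ → ℝ) (hηf : ∀ σ : ℝ, 0 ≤ σ → c ≤ ηf σ)
    (ξ₀ : ℝ) (hξ₀ : ξ₀ = -ηf 0)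
    (hmono : MonotoneOn (fun σ => σ - ηf σ) (Ici 0))
    (A : ℝ → ℝ)
    (G₀ : ℝ → ℝ)
    (G₁ G₂ : ℝ → ℝ)
    (hG₁init : ∀ σ ∈ Icc ξ₀ (0 : ℝ), G₁ σ = G₀ σ)
    (hG₂init : ∀ σ ∈ Icc ξ₀ (0 : ℝ), G₂ σ = G₀ σ)
    (S₁ S₂ : StieltjesFunction ℝ)
    (hS₁ : ∀ τ : ℝ, 0 ≤ τ → S₁ τ = G₁ (τ - ηf τ))
    (hS₂ : ∀ τ : ℝ, 0 ≤ τ → S₂ τ = G₂ (τ - ηf τ))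
    (heq₁ : ∀ σ : ℝ, 0 ≤ σ →
      G₁ σ = A σ + ∫ τ in Set.Ioc (0 : ℝ) σ, Hker (σ - τ) Λ ∂S₁.measure)
    (heq₂ : ∀ σ : ℝ, 0 ≤ σ →
      G₂ σ = A σ + ∫ τ in Set.Ioc (0 : ℝ) σ, Hker (σ - τ) Λ ∂S₂.measure) :
    ∀ σ : ℝ, 0 ≤ σ → G₁ σ = G₂ σ := by
  refine forall_nonneg_of_forall_Icc_imp_Icc_add hc fun M hM σ hσ => ?_
  have hS : EqOn S₁ S₂ (Icc 0 σ) := by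
    intro τ ⟨hτ, hτσ⟩
    have hξ_ge : ξ₀ ≤ τ - ηf τ := by simpa [hξ₀] using hmono self_mem_Ici hτ hτ
    have hξ_le : τ - ηf τ ≤ M := by linarith [hηf τ hτ, hσ.2]
    rw [hS₁ τ hτ, hS₂ τ hτ]
    rcases le_or_gt (τ - ηf τ) 0 with hneg | hpos
    · rw [hG₁init _ ⟨hξ_ge, hneg⟩, hG₂init _ ⟨hξ_ge, hneg⟩]
    · exact hM _ ⟨hpos.le, hξ_le⟩
  rw [heq₁ σ hσ.1, heq₂ σ hσ.1, StieltjesFunction.restrict_Ioc_measure_eq_of_eqOn hS]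

/-- Uniqueness of solutions of the delayed quasi-renewal equation
`G σ = A σ + ∫_{(0,σ]} H(σ-τ, Λ) dμ_G(τ)`, where `μ_G` is the Lebesgue–Stieltjes
measure of `τ ↦ G (ξfun τ)` with `ξfun σ = σ - ηf σ` for a backward-delay function
`ηf ≥ c > 0` with nondecreasing, right-continuous `ξfun`. -/
theorem quasi_renewal_uniqueness
    (Λ c : ℝ) (hΛ : 0 < Λ) (hc : 0 < c)
    (ηf : ℝ → ℝ) (hηf : ∀ σ : ℝ, 0 ≤ σ → c ≤ ηf σ)
    (ξ₀ : ℝ) (hξ₀ : ξ₀ = -ηf 0)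
    (hmono : MonotoneOn (fun σ => σ - ηf σ) (Ici 0))
    (hrc : ∀ σ : ℝ, 0 ≤ σ → ContinuousWithinAt (fun σ => σ - ηf σ) (Ici σ) σ)
    (A : ℝ → ℝ)
    (G₀ : ℝ → ℝ) (hG₀mono : MonotoneOn G₀ (Icc ξ₀ 0))
    (hG₀cont : ContinuousOn G₀ (Icc ξ₀ 0))
    (G₁ G₂ : ℝ → ℝ)
    (hG₁mono : MonotoneOn G₁ (Ici ξ₀)) (hG₂mono : MonotoneOn G₂ (Ici ξ₀))
    (hG₁cont : ContinuousOn G₁ (Ici ξ₀)) (hG₂cont : ContinuousOn G₂ (Ici ξ₀))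
    (hG₁init : ∀ σ ∈ Icc ξ₀ (0 : ℝ), G₁ σ = G₀ σ)
    (hG₂init : ∀ σ ∈ Icc ξ₀ (0 : ℝ), G₂ σ = G₀ σ)
    (hG₁diff : ContDiffOn ℝ 1 G₁ (Ioi 0)) (hG₂diff : ContDiffOn ℝ 1 G₂ (Ioi 0))
    (S₁ S₂ : StieltjesFunction ℝ)
    (hS₁ : ∀ τ : ℝ, 0 ≤ τ → S₁ τ = G₁ (τ - ηf τ))
    (hS₂ : ∀ τ : ℝ, 0 ≤ τ → S₂ τ = G₂ (τ - ηf τ))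
    (heq₁ : ∀ σ : ℝ, 0 ≤ σ →
      G₁ σ = A σ + ∫ τ in Set.Ioc (0 : ℝ) σ, Hker (σ - τ) Λ ∂S₁.measure)
    (heq₂ : ∀ σ : ℝ, 0 ≤ σ →
      G₂ σ = A σ + ∫ τ in Set.Ioc (0 : ℝ) σ, Hker (σ - τ) Λ ∂S₂.measure) :
    ∀ σ : ℝ, 0 ≤ σ → G₁ σ = G₂ σ :=
  quasi_renewal_uniqueness_general Λ c hc ηf hηf ξ₀ hξ₀ hmono A G₀ G₁ G₂ hG₁init hG₂init S₁ S₂ hS₁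
    hS₂ heq₁ heq₂
end

section
/- Let δ, ε > 0, ξ₀ < 0, and let Ψ_a, Ψ_b : [ξ₀,∞) → ℝ be continuous functions with Ψ_a(ξ₀) = Ψ_b(ξ₀), whose difference quotients satisfy (Ψ(y) − Ψ(x))/(y − x) ≥ δ for all ξ₀ ≤ x < y (for Ψ = Ψ_a, Ψ_b), and such that Ψ_a(σ) − ε ≥ Ψ_a(ξ₀) and Ψ_b(σ) − ε ≥ Ψ_b(ξ₀) for all σ ≥ 0. Then the backward functions ξ[Ψ](σ) = Ψ⁻¹(Ψ(σ) − ε) satisfy, for every σ ≥ 0, |ξ[Ψ_a](σ) − ξ[Ψ_b](σ)| ≤ (2/δ)·sup_{ξ₀ ≤ s ≤ σ} |Ψ_a(s) − Ψ_b(s)|. In particular Ψ ↦ ξ[Ψ] is Lipschitz with respect to the uniform norm. -/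
open Set

/-- The map `Ψ ↦ ξ[Ψ]`, where `ξ[Ψ] σ = Ψ⁻¹ (Ψ σ - ε)` is the backward
function of a candidate inverse time change with difference quotients `≥ δ > 0`, is
Lipschitz (with constant `2/δ`) with respect to the uniform norm. -/
theorem backward_function_lipschitz
    (δ ε ξ₀ : ℝ) (hδ : 0 < δ) (hε : 0 < ε) (hξ₀ : ξ₀ < 0)
    (Ψa Ψb : ℝ → ℝ)
    (hconta : ContinuousOn Ψa (Ici ξ₀)) (hcontb : ContinuousOn Ψb (Ici ξ₀))
    (hinit : Ψa ξ₀ = Ψb ξ₀)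
    (hquota : ∀ x y : ℝ, ξ₀ ≤ x → x < y → δ ≤ (Ψa y - Ψa x) / (y - x))
    (hquotb : ∀ x y : ℝ, ξ₀ ≤ x → x < y → δ ≤ (Ψb y - Ψb x) / (y - x))
    (hεa : ∀ σ : ℝ, 0 ≤ σ → Ψa ξ₀ ≤ Ψa σ - ε)
    (hεb : ∀ σ : ℝ, 0 ≤ σ → Ψb ξ₀ ≤ Ψb σ - ε)
    (ξa ξb : ℝ → ℝ)
    (hξa : ∀ σ : ℝ, 0 ≤ σ → ξ₀ ≤ ξa σ ∧ Ψa (ξa σ) = Ψa σ - ε)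
    (hξb : ∀ σ : ℝ, 0 ≤ σ → ξ₀ ≤ ξb σ ∧ Ψb (ξb σ) = Ψb σ - ε) :
    ∀ σ : ℝ, 0 ≤ σ →
      |ξa σ - ξb σ| ≤ (2 / δ) * sSup ((fun s => |Ψa s - Ψb s|) '' Icc ξ₀ σ) := by
  intro σ hσ
  have hξ₀σ : ξ₀ ≤ σ := (hξ₀.trans_le hσ).le
  obtain ⟨ha1, ha2⟩ := hξa σ hσ
  obtain ⟨hb1, hb2⟩ := hξb σ hσ
  -- growth lemmas
  have growa : ∀ x y : ℝ, ξ₀ ≤ x → x ≤ y → δ * (y - x) ≤ Ψa y - Ψa x := by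
    intro x y hx hxy
    rcases eq_or_lt_of_le hxy with rfl | h
    · simp
    · have := hquota x y hx h
      calc δ * (y - x) ≤ ((Ψa y - Ψa x) / (y - x)) * (y - x) := by
            apply mul_le_mul_of_nonneg_right this (by linarith)
        _ = Ψa y - Ψa x := div_mul_cancel₀ _ (by linarith)
  have growb : ∀ x y : ℝ, ξ₀ ≤ x → x ≤ y → δ * (y - x) ≤ Ψb y - Ψb x := by
    intro x y hx hxy
    rcases eq_or_lt_of_le hxy with rfl | h
    · simp
    · have := hquotb x y hx h
      calc δ * (y - x) ≤ ((Ψb y - Ψb x) / (y - x)) * (y - x) := by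
            apply mul_le_mul_of_nonneg_right this (by linarith)
        _ = Ψb y - Ψb x := div_mul_cancel₀ _ (by linarith)
  -- ξa σ ≤ σ and ξb σ ≤ σ
  have hξaσ : ξa σ ≤ σ := by
    by_contra h
    push_neg at h
    have := growa σ (ξa σ) hξ₀σ h.le
    nlinarith
  have hξbσ : ξb σ ≤ σ := by
    by_contra h
    push_neg at h
    have := growb σ (ξb σ) hξ₀σ h.le
    nlinarith
  -- sSup bound
  set M := sSup ((fun s => |Ψa s - Ψb s|) '' Icc ξ₀ σ) with hM
  have hbdd : BddAbove ((fun s => |Ψa s - Ψb s|) '' Icc ξ₀ σ) := by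
    apply (isCompact_Icc.image_of_continuousOn ?_).bddAbove
    exact ((hconta.mono (Icc_subset_Ici_self)).sub
      (hcontb.mono (Icc_subset_Ici_self))).abs
  have hle : ∀ s : ℝ, s ∈ Icc ξ₀ σ → |Ψa s - Ψb s| ≤ M :=
    fun s hs => le_csSup hbdd ⟨s, hs, rfl⟩
  have h1 : |Ψa σ - Ψb σ| ≤ M := hle σ ⟨hξ₀σ, le_refl σ⟩
  have h2 : |Ψa (ξb σ) - Ψb (ξb σ)| ≤ M := hle _ ⟨hb1, hξbσ⟩
  -- key inequality : δ * |ξa σ - ξb σ| ≤ |Ψa (ξa σ) - Ψa (ξb σ)|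
  have key : δ * |ξa σ - ξb σ| ≤ |Ψa (ξa σ) - Ψa (ξb σ)| := by
    rcases le_total (ξa σ) (ξb σ) with h | h
    · have := growa (ξa σ) (ξb σ) ha1 h
      rw [abs_of_nonpos (by nlinarith), abs_sub_comm,
        abs_of_nonneg (by nlinarith)]
      linarith
    · have := growa (ξb σ) (ξa σ) hb1 h
      rw [abs_of_nonneg (by nlinarith), abs_of_nonneg (by nlinarith)]
      linarith
  -- combine
  have hdiff : Ψa (ξa σ) - Ψa (ξb σ)
      = (Ψa σ - Ψb σ) + (Ψb (ξb σ) - Ψa (ξb σ)) := by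
    rw [ha2]
    have : Ψb (ξb σ) = Ψb σ - ε := hb2
    linarith
  have habs : |Ψa (ξa σ) - Ψa (ξb σ)| ≤ 2 * M := by
    rw [hdiff]
    calc |(Ψa σ - Ψb σ) + (Ψb (ξb σ) - Ψa (ξb σ))|
        ≤ |Ψa σ - Ψb σ| + |Ψb (ξb σ) - Ψa (ξb σ)| := abs_add_le _ _
      _ ≤ M + M := add_le_add h1 (by rwa [abs_sub_comm])
      _ = 2 * M := by ring
  rw [div_mul_eq_mul_div, le_div_iff₀ hδ]
  nlinarith
end

section
/- Let q : [0,∞) → ℝ have polynomial growth, i.e. |q(x)| ≤ K·(1 + x^d) for some K > 0 and natural number d. Then for every δ > 0 and all natural numbers m and n, lim_{σ → 0⁺} σ^{−m} · ∫_δ^∞ exp(−(x − σ)²/(2σ)) · x^n · |q(x)| dx = 0. -/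
open Set MeasureTheory Filter

/-- Gaussian tail estimate against functions of polynomial growth: for
every `δ > 0` and all naturals `m, n`,
`σ^(-m) ∫_δ^∞ exp(-(x-σ)²/(2σ)) xⁿ |q x| dx → 0` as `σ → 0⁺`. -/
theorem gaussian_tail_vanishes
    (q : ℝ → ℝ) (K : ℝ) (hK : 0 < K) (d : ℕ)
    (hpoly : ∀ x : ℝ, 0 ≤ x → |q x| ≤ K * (1 + x ^ d)) :
    ∀ δ : ℝ, 0 < δ → ∀ m n : ℕ,
      Tendsto
        (fun σ => (∫ x in Ioi δ, Real.exp (-(x - σ) ^ 2 / (2 * σ)) * x ^ n * |q x|) / σ ^ m)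
        (nhdsWithin 0 (Ioi 0)) (nhds 0) := by
  intro δ hδ m n
  set c : ℝ := δ ^ 2 / 16 with hc_def
  have hc : 0 < c := by positivity
  -- integrability of the dominating function
  have hint : ∀ k : ℕ, IntegrableOn (fun x : ℝ => x ^ k * Real.exp (-(1/16) * x ^ 2)) (Ioi δ) := by
    intro k
    have h1 : IntegrableOn (fun x : ℝ => x ^ (k : ℝ) * Real.exp (-(1/16) * x ^ 2)) (Ioi δ) :=
      (integrableOn_rpow_mul_exp_neg_mul_sq (by norm_num : (0:ℝ) < 1/16)
        (lt_of_lt_of_le (by norm_num) (Nat.cast_nonneg k))).mono_set (Ioi_subset_Ioi hδ.le)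
    simpa [Real.rpow_natCast] using h1
  set h : ℝ → ℝ := fun x => K * (x ^ n * Real.exp (-(1/16) * x ^ 2))
      + K * (x ^ (n + d) * Real.exp (-(1/16) * x ^ 2)) with hh_def
  have hint2 : IntegrableOn h (Ioi δ) := (((hint n).const_mul K).add ((hint (n + d)).const_mul K))
  set C : ℝ := ∫ x in Ioi δ, h x with hC_def
  have hC : 0 ≤ C := by
    apply setIntegral_nonneg measurableSet_Ioi
    intro x hx
    have hx0 : (0:ℝ) < x := hδ.trans hx
    positivity
  set ε : ℝ := min 1 (δ / 2) with hε_def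
  have hε : 0 < ε := by
    apply lt_min one_pos; positivity
  -- key pointwise and integral bound
  have key : ∀ σ : ℝ, σ ∈ Ioo (0:ℝ) ε →
      (∫ x in Ioi δ, Real.exp (-(x - σ) ^ 2 / (2 * σ)) * x ^ n * |q x|)
        ≤ Real.exp (-c / σ) * C := by
    intro σ hσ
    obtain ⟨hσ0, hσε⟩ := hσ
    have hσ1 : σ ≤ 1 := le_of_lt (lt_of_lt_of_le hσε (min_le_left _ _))
    have hσδ : σ ≤ δ / 2 := le_of_lt (lt_of_lt_of_le hσε (min_le_right _ _))
    have hbnd : ∀ x ∈ Ioi δ,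
        Real.exp (-(x - σ) ^ 2 / (2 * σ)) * x ^ n * |q x| ≤ Real.exp (-c / σ) * h x := by
      intro x hx
      have hxδ : δ < x := hx
      have hx0 : (0:ℝ) < x := hδ.trans hxδ
      have hA1 : δ ^ 2 / 4 ≤ (x - σ) ^ 2 := by nlinarith
      have hA2 : x ^ 2 / 4 ≤ (x - σ) ^ 2 := by nlinarith
      have hexp : -(x - σ) ^ 2 / (2 * σ) ≤ -c / σ + (-(1/16) * x ^ 2) := by
        have heq : (-c / σ + (-(1/16) * x ^ 2)) - (-(x - σ) ^ 2 / (2 * σ))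
            = (8 * (x - σ) ^ 2 - δ ^ 2 - σ * x ^ 2) / (16 * σ) := by
          rw [hc_def]; field_simp; ring
        have hnum : 0 ≤ 8 * (x - σ) ^ 2 - δ ^ 2 - σ * x ^ 2 := by nlinarith
        have : 0 ≤ (-c / σ + (-(1/16) * x ^ 2)) - (-(x - σ) ^ 2 / (2 * σ)) := by
          rw [heq]; positivity
        linarith
      have hexp2 : Real.exp (-(x - σ) ^ 2 / (2 * σ))
          ≤ Real.exp (-c / σ) * Real.exp (-(1/16) * x ^ 2) := by
        rw [← Real.exp_add]
        exact Real.exp_le_exp.mpr hexp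
      have hq : |q x| ≤ K * (1 + x ^ d) := hpoly x hx0.le
      calc Real.exp (-(x - σ) ^ 2 / (2 * σ)) * x ^ n * |q x|
          ≤ (Real.exp (-c / σ) * Real.exp (-(1/16) * x ^ 2)) * x ^ n * (K * (1 + x ^ d)) := by
            apply mul_le_mul
            · apply mul_le_mul_of_nonneg_right hexp2 (by positivity)
            · exact hq
            · exact abs_nonneg _
            · positivity
        _ = Real.exp (-c / σ) * h x := by simp only [hh_def, pow_add]; ring
    calc (∫ x in Ioi δ, Real.exp (-(x - σ) ^ 2 / (2 * σ)) * x ^ n * |q x|)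
        ≤ ∫ x in Ioi δ, Real.exp (-c / σ) * h x := by
          apply integral_mono_of_nonneg
          · filter_upwards [ae_restrict_mem measurableSet_Ioi] with x hx
            have hx0 : (0:ℝ) < x := hδ.trans hx
            positivity
          · exact hint2.const_mul _
          · filter_upwards [ae_restrict_mem measurableSet_Ioi] with x hx
            exact hbnd x hx
      _ = Real.exp (-c / σ) * C := by rw [hC_def, integral_const_mul]
  -- the majorant tends to 0
  have hG : Tendsto (fun σ : ℝ => Real.exp (-c / σ) * C / σ ^ m) (nhdsWithin 0 (Ioi 0)) (nhds 0) := by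
    have h1 : Tendsto (fun t : ℝ => (c * t) ^ m * Real.exp (-(c * t))) atTop (nhds 0) :=
      (Real.tendsto_pow_mul_exp_neg_atTop_nhds_zero m).comp
        (Tendsto.const_mul_atTop hc tendsto_id)
    have h2 : Tendsto (fun t : ℝ => t ^ m * Real.exp (-(c * t))) atTop (nhds 0) := by
      have h3 := h1.const_mul ((c : ℝ) ^ m)⁻¹
      rw [mul_zero] at h3
      refine h3.congr fun t => ?_
      rw [mul_pow]
      field_simp
    have h4 : Tendsto (fun σ : ℝ => (σ⁻¹) ^ m * Real.exp (-(c * σ⁻¹)))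
        (nhdsWithin 0 (Ioi 0)) (nhds 0) := h2.comp tendsto_inv_nhdsGT_zero
    have h5 := h4.const_mul C
    rw [mul_zero] at h5
    refine h5.congr' ?_
    filter_upwards [self_mem_nhdsWithin] with σ hσ
    have hσ0 : (0:ℝ) < σ := hσ
    rw [show -c / σ = -(c * σ⁻¹) by rw [neg_div, div_eq_mul_inv], div_eq_mul_inv, ← inv_pow]
    ring
  -- squeeze
  apply tendsto_of_tendsto_of_tendsto_of_le_of_le' tendsto_const_nhds hG
  · filter_upwards [self_mem_nhdsWithin] with σ hσ
    have hσ0 : (0:ℝ) < σ := hσ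
    apply div_nonneg _ (by positivity)
    apply setIntegral_nonneg measurableSet_Ioi
    intro x hx
    have hx0 : (0:ℝ) < x := hδ.trans hx
    positivity
  · filter_upwards [Ioo_mem_nhdsGT_of_mem (Set.mem_Ico.mpr ⟨le_refl 0, hε⟩)] with σ hσ
    have hσ0 : (0:ℝ) < σ := hσ.1
    gcongr
    exact key σ hσ
end

section
/- For every real d ≥ 0, ∫_0^∞ (1 + x^d)/(1 + x^{d+2}) dx = 2·Γ((1+d)/(2+d))·Γ((3+d)/(2+d)), where Γ denotes the Gamma function. -/
/-!
Substituting `x = y ^ (1 / p)` turns `∫₀^∞ x^(s-1) / (1 + x^p) dx` into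
`p⁻¹ ∫₀^∞ y^(s/p-1) / (1 + y) dy`, and `t = y / (1 + y)` turns that into the Beta integral
`B(s/p, 1 - s/p) = Γ(s/p) Γ(1 - s/p)`. With `p = d + 2` the integrand `(1 + x^d) / (1 + x^p)` is
the sum of the cases `s = 1` and `s = d + 1`, which both give `Γ(1/p) Γ(1 - 1/p) / p`, and
`Γ(1/p) / p = Γ(1/p + 1)`.
-/

open Set MeasureTheory Real

theorem integral_rpow_mul_one_sub_rpow {u v : ℝ} (hu : 0 < u) (hv : 0 < v) :
    ∫ t in (0 : ℝ)..1, t ^ (u - 1) * (1 - t) ^ (v - 1) = Gamma u * Gamma v / Gamma (u + v) := by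
  have hcast : ((∫ t in (0 : ℝ)..1, t ^ (u - 1) * (1 - t) ^ (v - 1) : ℝ) : ℂ) =
      Complex.betaIntegral u v := by
    rw [Complex.betaIntegral, ← intervalIntegral.integral_ofReal]
    refine intervalIntegral.integral_congr fun t ht => ?_
    rw [uIcc_of_le zero_le_one] at ht
    push_cast [Complex.ofReal_cpow ht.1, Complex.ofReal_cpow (sub_nonneg.2 ht.2)]
    rfl
  rw [Complex.betaIntegral_eq_Gamma_mul_div _ _ (by simpa) (by simpa), ← Complex.ofReal_add,
    Complex.Gamma_ofReal, Complex.Gamma_ofReal, Complex.Gamma_ofReal] at hcast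
  exact_mod_cast hcast

theorem image_div_one_add_Ioi : (fun x : ℝ => x / (1 + x)) '' Ioi 0 = Ioo 0 1 := by
  ext t
  constructor
  · rintro ⟨x, hx, rfl⟩
    have hx : 0 < x := hx
    exact ⟨by positivity, (div_lt_one (by positivity)).2 (by linarith)⟩
  · rintro ⟨ht0, ht1⟩
    refine ⟨t / (1 - t), div_pos ht0 (by linarith), ?_⟩
    have : 1 - t ≠ 0 := by linarith
    field_simp
    ring

theorem injOn_div_one_add_Ioi : InjOn (fun x : ℝ => x / (1 + x)) (Ioi 0) := by
  intro x hx y hy hxy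
  have hx : 0 < x := hx
  have hy : 0 < y := hy
  field_simp at hxy
  linarith

theorem integral_Ioi_rpow_div_rpow_one_add {u v : ℝ} (hu : 0 < u) (hv : 0 < v) :
    ∫ x in Ioi (0 : ℝ), x ^ (u - 1) / (1 + x) ^ (u + v) = Gamma u * Gamma v / Gamma (u + v) := by
  have hderiv : ∀ x ∈ Ioi (0 : ℝ),
      HasDerivWithinAt (fun x : ℝ => x / (1 + x)) (((1 + x) ^ 2)⁻¹) (Ioi 0) x := by
    intro x hx
    have hx : 0 < x := hx
    refine (((hasDerivAt_id' x).div ((hasDerivAt_id' x).const_add 1)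
      (by positivity)).hasDerivWithinAt).congr_deriv ?_
    field_simp
    ring
  rw [← integral_rpow_mul_one_sub_rpow hu hv, intervalIntegral.integral_of_le zero_le_one,
    integral_Ioc_eq_integral_Ioo, ← image_div_one_add_Ioi,
    integral_image_eq_integral_abs_deriv_smul measurableSet_Ioi hderiv injOn_div_one_add_Ioi]
  refine setIntegral_congr_fun measurableSet_Ioi fun x hx => ?_
  have hx : 0 < x := hx
  have h1x : 0 < 1 + x := by linarith
  have hsplit : (1 + x) ^ (u + v) = (1 + x) ^ (u - 1) * (1 + x) ^ (v - 1) * (1 + x) ^ 2 := by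
    rw [← rpow_add h1x, ← rpow_natCast, ← rpow_add h1x]
    congr 1
    push_cast
    ring
  have hcompl : 1 - x / (1 + x) = (1 + x)⁻¹ := by field_simp; ring
  simp only [smul_eq_mul, hcompl, div_rpow hx.le h1x.le, inv_rpow h1x.le, hsplit,
    abs_of_pos (by positivity : 0 < ((1 + x) ^ 2)⁻¹)]
  field_simp

theorem integral_Ioi_rpow_div_one_add_rpow {s p : ℝ} (hs : 0 < s) (hsp : s < p) :
    ∫ x in Ioi (0 : ℝ), x ^ (s - 1) / (1 + x ^ p) = Gamma (s / p) * Gamma (1 - s / p) / p := by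
  have hp : 0 < p := hs.trans hsp
  have hsp' : 0 < 1 - s / p := sub_pos.2 ((div_lt_one hp).2 hsp)
  rw [← integral_comp_rpow_Ioi_of_pos (inv_pos.2 hp)]
  calc ∫ x in Ioi (0 : ℝ), (p⁻¹ * x ^ (p⁻¹ - 1)) • ((x ^ p⁻¹) ^ (s - 1) / (1 + (x ^ p⁻¹) ^ p))
      = ∫ x in Ioi (0 : ℝ), p⁻¹ * (x ^ (s / p - 1) / (1 + x) ^ (s / p + (1 - s / p))) := by
        refine setIntegral_congr_fun measurableSet_Ioi fun x hx => ?_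
        have hx : 0 < x := hx
        rw [smul_eq_mul, rpow_inv_rpow hx.le hp.ne', ← rpow_mul hx.le, add_sub_cancel, rpow_one,
          show s / p - 1 = (p⁻¹ - 1) + p⁻¹ * (s - 1) by ring, rpow_add hx]
        ring
    _ = Gamma (s / p) * Gamma (1 - s / p) / p := by
        rw [integral_const_mul, integral_Ioi_rpow_div_rpow_one_add (div_pos hs hp) hsp',
          add_sub_cancel, Gamma_one, div_one, inv_mul_eq_div]

theorem integrableOn_Ioi_rpow_div_one_add_rpow {s p : ℝ} (hs : 0 < s) (hsp : s < p) :
    IntegrableOn (fun x : ℝ => x ^ (s - 1) / (1 + x ^ p)) (Ioi 0) := by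
  have hp : 0 < p := hs.trans hsp
  -- a non-integrable function has integral `0`, so a nonzero value forces integrability
  refine Integrable.of_integral_ne_zero ?_
  rw [integral_Ioi_rpow_div_one_add_rpow hs hsp]
  have := Gamma_pos_of_pos (div_pos hs hp)
  have := Gamma_pos_of_pos (sub_pos.2 ((div_lt_one hp).2 hsp))
  positivity

/-- For every real `d ≥ 0`,
`∫_0^∞ (1 + x^d)/(1 + x^(d+2)) dx = 2 Γ((1+d)/(2+d)) Γ((3+d)/(2+d))`. -/
theorem polynomial_tail_integral (d : ℝ) (hd : 0 ≤ d) :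
    ∫ x in Ioi (0 : ℝ), (1 + x ^ d) / (1 + x ^ (d + 2)) =
      2 * Real.Gamma ((1 + d) / (2 + d)) * Real.Gamma ((3 + d) / (2 + d)) := by
  have hsplit : ∀ x : ℝ, (1 + x ^ d) / (1 + x ^ (d + 2)) =
      x ^ ((1 : ℝ) - 1) / (1 + x ^ (d + 2)) + x ^ ((d + 1) - 1) / (1 + x ^ (d + 2)) := by
    intro x
    rw [← add_div, sub_self, rpow_zero, add_sub_cancel_right]
  have h1 : (1 : ℝ) < d + 2 := by linarith
  have h2 : d + 1 < d + 2 := by linarith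
  simp_rw [hsplit]
  rw [integral_add (integrableOn_Ioi_rpow_div_one_add_rpow one_pos h1)
      (integrableOn_Ioi_rpow_div_one_add_rpow (by linarith) h2),
    integral_Ioi_rpow_div_one_add_rpow one_pos h1,
    integral_Ioi_rpow_div_one_add_rpow (by linarith) h2,
    show (3 + d) / (2 + d) = 1 / (d + 2) + 1 by field_simp; ring, Gamma_add_one (by positivity),
    show 1 - 1 / (d + 2) = (1 + d) / (2 + d) by field_simp; ring,
    show 1 - (d + 1) / (d + 2) = 1 / (d + 2) by field_simp; ring,
    show (d + 1) / (d + 2) = (1 + d) / (2 + d) by ring]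
  ring
end
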